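/- arXiv:2311.10157 — 2 statements merged into one kernel-verified Lean document; each statement's English description precedes it below -/
import Mathlib

section
/- For every integer k ≥ 0, the principal value integral (1/(2π)) p.v. ∫_{-π}^{π} e^{-iα/2}/(2 sin(α/2)) · e^{-ikα} dα equals -i/2, and for every integer k ≤ -1 it equals i/2. -/
open MeasureTheory Real Filter Topology

/-- The truncated integral `(1/(2π)) ∫_{ε ≤ |α| ≤ π} e^{-iα/2}/(2 sin(α/2)) e^{-ikα} dα`. -/
noncomputable def pvIntegralI (k : ℤ) (ε : ℝ) : ℂ :=
  (1 / (2 * π)) * ∫ α in Set.Icc (-π) (-ε) ∪ Set.Icc ε π,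
    Complex.exp (-Complex.I * (α : ℂ) / 2) / (2 * (Real.sin (α / 2) : ℂ)) *
      Complex.exp (-Complex.I * (k : ℂ) * (α : ℂ))

noncomputable def pvF (k : ℤ) (α : ℝ) : ℂ :=
  Complex.exp (-Complex.I * (α : ℂ) / 2) / (2 * (Real.sin (α / 2) : ℂ)) *
      Complex.exp (-Complex.I * (k : ℂ) * (α : ℂ))

noncomputable def pvD (n : ℕ) (x : ℝ) : ℝ :=
  1 + 2 * ∑ j ∈ Finset.range n, Real.cos ((j + 1) * x)

lemma csin (z : ℂ) : Complex.sin z = (Complex.exp (-z * Complex.I) - Complex.exp (z * Complex.I)) * Complex.I / 2 := rfl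

lemma dirichlet (n : ℕ) (x : ℝ) :
    Real.sin ((n + 1/2) * x) = Real.sin (x/2) * pvD n x := by
  induction n with
  | zero => simp [pvD]; ring_nf
  | succ n ih =>
    have h := Real.sin_sub_sin ((n + 1 + 1/2) * x) ((n + 1/2) * x)
    have h1 : ((n + 1 + 1/2) * x - (n + 1/2) * x) / 2 = x / 2 := by ring
    have h2 : ((n + 1 + 1/2) * x + (n + 1/2) * x) / 2 = (n + 1) * x := by ring
    rw [h1, h2] at h
    have : Real.sin ((n + 1 + 1/2) * x)
        = Real.sin ((n + 1/2) * x) + 2 * Real.sin (x/2) * Real.cos ((n+1)*x) := by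
      linarith
    push_cast
    rw [this, ih]
    simp [pvD, Finset.sum_range_succ]
    ring

lemma pointwise (k : ℤ) (x : ℝ) (hx : Real.sin (x/2) ≠ 0) :
    pvF k x + pvF k (-x)
      = -Complex.I * ((Real.sin (((k:ℝ) + 1/2) * x) / Real.sin (x/2) : ℝ) : ℂ) := by
  have hs : (Real.sin (x/2) : ℂ) ≠ 0 := Complex.ofReal_ne_zero.2 hx
  have h1 : Complex.exp (-Complex.I * (x:ℂ) / 2) * Complex.exp (-Complex.I * (k:ℂ) * x)
      = Complex.exp (-(((k:ℂ) + 1/2) * x) * Complex.I) := by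
    rw [← Complex.exp_add]; congr 1; ring
  have h2 : Complex.exp (-Complex.I * ((-x:ℝ):ℂ) / 2) * Complex.exp (-Complex.I * (k:ℂ) * ((-x:ℝ):ℂ))
      = Complex.exp ((((k:ℂ) + 1/2) * x) * Complex.I) := by
    rw [← Complex.exp_add]; push_cast; congr 1; ring
  have hsin1 : ((Real.sin (((k:ℝ) + 1/2) * x) : ℝ) : ℂ)
      = (Complex.exp (-(((k:ℂ) + 1/2) * x) * Complex.I)
          - Complex.exp ((((k:ℂ) + 1/2) * x) * Complex.I)) * Complex.I / 2 := by
    rw [Complex.ofReal_sin, ← csin]; push_cast; ring_nf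
  have hneg : ((Real.sin ((-x)/2) : ℝ) : ℂ) = -(Real.sin (x/2) : ℂ) := by
    rw [neg_div, Real.sin_neg]; push_cast; ring
  unfold pvF
  rw [div_mul_eq_mul_div, div_mul_eq_mul_div, h1, h2, hneg, Complex.ofReal_div, hsin1]
  have hI := Complex.I_sq
  field_simp
  ring_nf
  rw [Complex.I_sq]
  ring

lemma pvF_contOn (k : ℤ) (s : Set ℝ) (hs : ∀ x ∈ s, Real.sin (x/2) ≠ 0) :
    ContinuousOn (pvF k) s := by
  unfold pvF
  apply ContinuousOn.mul
  · apply ContinuousOn.div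
    · fun_prop
    · fun_prop
    · intro x hxs
      simp only [ne_eq, mul_eq_zero, OfNat.ofNat_ne_zero, false_or, Complex.ofReal_eq_zero]
      exact hs x hxs
  · fun_prop

lemma sin_half_ne_zero {x : ℝ} (h1 : x ≠ 0) (h2 : |x| ≤ π) : Real.sin (x/2) ≠ 0 := by
  rcases abs_le.1 h2 with ⟨hl, hr⟩
  rcases lt_or_gt_of_ne h1 with h | h
  · have : Real.sin (x/2) < 0 := by
      apply Real.sin_neg_of_neg_of_neg_pi_lt (by linarith)
      linarith [Real.pi_pos]
    linarith
  · have : 0 < Real.sin (x/2) := by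
      apply Real.sin_pos_of_pos_of_lt_pi (by linarith)
      linarith [Real.pi_pos]
    linarith

lemma step1 (k : ℤ) (ε : ℝ) (hε : 0 < ε) (hεπ : ε < π) :
    pvIntegralI k ε = (1 / (2 * (π:ℂ))) * ∫ x in ε..π, (pvF k x + pvF k (-x)) := by
  have hne1 : ∀ x ∈ Set.Icc (-π) (-ε), Real.sin (x/2) ≠ 0 := by
    intro x hx
    exact sin_half_ne_zero (by rcases hx with ⟨_, h⟩; intro hh; rw [hh] at h; linarith)
      (abs_le.2 ⟨hx.1, by linarith [hx.2]⟩)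
  have hne2 : ∀ x ∈ Set.Icc ε π, Real.sin (x/2) ≠ 0 := by
    intro x hx
    exact sin_half_ne_zero (by intro hh; rw [hh] at hx; linarith [hx.1])
      (abs_le.2 ⟨by linarith [hx.1], hx.2⟩)
  have hi1 : IntegrableOn (pvF k) (Set.Icc (-π) (-ε)) volume :=
    (pvF_contOn k _ hne1).integrableOn_Icc
  have hi2 : IntegrableOn (pvF k) (Set.Icc ε π) volume :=
    (pvF_contOn k _ hne2).integrableOn_Icc
  have hdisj : Disjoint (Set.Icc (-π) (-ε)) (Set.Icc ε π) := by
    apply Set.disjoint_left.2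
    rintro x ⟨_, h1⟩ ⟨h2, _⟩
    linarith
  have hsplit : (∫ α in Set.Icc (-π) (-ε) ∪ Set.Icc ε π, pvF k α)
      = (∫ α in Set.Icc (-π) (-ε), pvF k α) + ∫ α in Set.Icc ε π, pvF k α :=
    setIntegral_union hdisj measurableSet_Icc hi1 hi2
  have e1 : (∫ α in Set.Icc (-π) (-ε), pvF k α) = ∫ x in (-π)..(-ε), pvF k x := by
    rw [integral_Icc_eq_integral_Ioc, intervalIntegral.integral_of_le (by linarith)]
  have e2 : (∫ α in Set.Icc ε π, pvF k α) = ∫ x in ε..π, pvF k x := by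
    rw [integral_Icc_eq_integral_Ioc, intervalIntegral.integral_of_le (by linarith)]
  have e3 : (∫ x in (-π)..(-ε), pvF k x) = ∫ x in ε..π, pvF k (-x) := by
    rw [intervalIntegral.integral_comp_neg (fun x => pvF k x)]
  have huIcc : Set.uIcc ε π = Set.Icc ε π := Set.uIcc_of_le (by linarith)
  have hii2 : IntervalIntegrable (pvF k) volume ε π := by
    apply ContinuousOn.intervalIntegrable
    rw [huIcc]; exact pvF_contOn k _ hne2
  have hii1 : IntervalIntegrable (fun x => pvF k (-x)) volume ε π := by
    apply ContinuousOn.intervalIntegrable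
    rw [huIcc]
    exact (pvF_contOn k _ hne1).comp continuous_neg.continuousOn
      (fun x hx => ⟨by simp; linarith [hx.2], by simp; linarith [hx.1]⟩)
  have e4 : (∫ x in ε..π, pvF k (-x)) + (∫ x in ε..π, pvF k x)
      = ∫ x in ε..π, (pvF k x + pvF k (-x)) := by
    rw [intervalIntegral.integral_add hii2 hii1]; ring
  have h0 : pvIntegralI k ε
      = (1 / (2 * (π:ℂ))) * ∫ α in Set.Icc (-π) (-ε) ∪ Set.Icc ε π, pvF k α := rfl
  rw [h0, hsplit, e1, e2, e3, e4]

lemma step2 (k : ℤ) (n : ℕ) (s : ℝ) (hs : s = 1 ∨ s = -1)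
    (hk : (k:ℝ) + 1/2 = s * (n + 1/2)) (ε : ℝ) (hε : 0 < ε) (hεπ : ε < π) :
    (∫ x in ε..π, (pvF k x + pvF k (-x)))
      = -Complex.I * (s:ℂ) * ((∫ x in ε..π, pvD n x : ℝ) : ℂ) := by
  have hcongr : ∀ x ∈ Set.uIcc ε π,
      pvF k x + pvF k (-x) = -Complex.I * (s:ℂ) * ((pvD n x : ℝ) : ℂ) := by
    intro x hx
    rw [Set.uIcc_of_le (by linarith)] at hx
    have hxne : Real.sin (x/2) ≠ 0 :=
      sin_half_ne_zero (by intro h; rw [h] at hx; linarith [hx.1])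
        (abs_le.2 ⟨by linarith [hx.1], hx.2⟩)
    rw [pointwise k x hxne]
    have hd := dirichlet n x
    have hsin : Real.sin (((k:ℝ) + 1/2) * x) = s * (Real.sin (x/2) * pvD n x) := by
      rcases hs with h | h
      · subst h; rw [hk]; rw [show (1:ℝ) * ((n:ℝ) + 1/2) * x = ((n:ℝ) + 1/2) * x by ring,
          hd]; ring
      · subst h; rw [hk, show (-1:ℝ) * ((n:ℝ) + 1/2) * x = -(((n:ℝ) + 1/2) * x) by ring,
          Real.sin_neg, hd]; ring
    have hre : s * (Real.sin (x/2) * pvD n x) / Real.sin (x/2) = s * pvD n x := by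
      field_simp
    rw [hsin, hre]
    push_cast
    ring
  rw [intervalIntegral.integral_congr hcongr, intervalIntegral.integral_const_mul,
    intervalIntegral.integral_ofReal]

lemma pvD_cont (n : ℕ) : Continuous (pvD n) := by
  unfold pvD
  fun_prop

lemma integralD (n : ℕ) : ∫ x in (0:ℝ)..π, pvD n x = π := by
  unfold pvD
  have hint : ∀ (j : ℕ), IntervalIntegrable (fun x => Real.cos ((j+1 : ℝ) * x)) volume 0 π := by
    intro j
    apply Continuous.intervalIntegrable
    fun_prop
  have hcos : ∀ j ∈ Finset.range n, (∫ x in (0:ℝ)..π, Real.cos ((j+1 : ℝ) * x)) = 0 := by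
    intro j _
    have hc : (j + 1 : ℝ) ≠ 0 := by positivity
    rw [intervalIntegral.integral_comp_mul_left (fun x => Real.cos x) hc]
    have : (j + 1 : ℝ) * π = ((j+1 : ℕ) : ℝ) * π := by push_cast; ring
    simp [integral_cos, this, Real.sin_nat_mul_pi]
  have h1 : IntervalIntegrable (fun _ : ℝ => (1:ℝ)) volume 0 π := intervalIntegrable_const
  have h2 : IntervalIntegrable (fun x => 2 * ∑ j ∈ Finset.range n, Real.cos ((j+1 : ℝ) * x))
      volume 0 π := by
    apply Continuous.intervalIntegrable; fun_prop
  rw [intervalIntegral.integral_add h1 h2, intervalIntegral.integral_const_mul,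
    intervalIntegral.integral_finset_sum (fun j _ => hint j)]
  rw [Finset.sum_congr rfl hcos]
  simp

lemma tendstoD (n : ℕ) :
    Tendsto (fun ε => ∫ x in ε..π, pvD n x) (𝓝[>] (0:ℝ)) (𝓝 π) := by
  have hc : Continuous fun b => ∫ x in π..b, pvD n x :=
    intervalIntegral.continuous_primitive
      (fun a b => ((pvD_cont n).intervalIntegrable a b)) π
  have h1 : Tendsto (fun b => -∫ x in π..b, pvD n x) (𝓝 (0:ℝ))
      (𝓝 (-∫ x in π..(0:ℝ), pvD n x)) := (hc.tendsto 0).neg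
  have heq : (fun b => -∫ x in π..b, pvD n x) = fun b => ∫ x in b..π, pvD n x := by
    funext b
    rw [intervalIntegral.integral_symm, neg_neg]
  have hval : -∫ x in π..(0:ℝ), pvD n x = π := by
    rw [intervalIntegral.integral_symm, neg_neg, integralD]
  rw [heq, hval] at h1
  exact h1.mono_left nhdsWithin_le_nhds

lemma key (k : ℤ) (n : ℕ) (s : ℝ) (hs : s = 1 ∨ s = -1)
    (hk : (k:ℝ) + 1/2 = s * (n + 1/2)) :
    Tendsto (pvIntegralI k) (𝓝[>] (0:ℝ)) (𝓝 (-Complex.I * (s:ℂ) / 2)) := by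
  have hev : (fun ε => (1/(2*(π:ℂ))) * (-Complex.I * (s:ℂ) * ((∫ x in ε..π, pvD n x : ℝ):ℂ)))
      =ᶠ[𝓝[>] (0:ℝ)] pvIntegralI k := by
    filter_upwards [Ioo_mem_nhdsGT Real.pi_pos] with ε hε
    rw [step1 k ε hε.1 hε.2, step2 k n s hs hk ε hε.1 hε.2]
  have ht : Tendsto (fun ε => (1/(2*(π:ℂ))) * (-Complex.I * (s:ℂ) *
      ((∫ x in ε..π, pvD n x : ℝ):ℂ))) (𝓝[>] (0:ℝ))
      (𝓝 ((1/(2*(π:ℂ))) * (-Complex.I * (s:ℂ) * ((π:ℝ):ℂ)))) := by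
    apply Tendsto.const_mul
    apply Tendsto.const_mul
    exact (Complex.continuous_ofReal.tendsto π).comp (tendstoD n)
  have hval : (1/(2*(π:ℂ))) * (-Complex.I * (s:ℂ) * ((π:ℝ):ℂ)) = -Complex.I * (s:ℂ) / 2 := by
    have hπ : (π:ℂ) ≠ 0 := by exact_mod_cast Real.pi_ne_zero
    field_simp
  rw [hval] at ht
  exact ht.congr' hev

/-- For `k ≥ 0` the principal value integral equals `-i/2`, and for `k ≤ -1` it equals `i/2`. -/
theorem stmt0 (k : ℤ) :
    (0 ≤ k → Tendsto (pvIntegralI k) (𝓝[>] 0) (𝓝 (-Complex.I / 2))) ∧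
    (k ≤ -1 → Tendsto (pvIntegralI k) (𝓝[>] 0) (𝓝 (Complex.I / 2))) := by
  constructor
  · intro hk
    have h := key k k.toNat 1 (Or.inl rfl)
      (by rw [show ((k.toNat : ℕ) : ℝ) = (k : ℝ) by exact_mod_cast congrArg Int.cast (Int.toNat_of_nonneg hk)]; ring)
    simpa using h
  · intro hk
    have h := key k (-k - 1).toNat (-1) (Or.inr rfl)
      (by rw [show (((-k - 1).toNat : ℕ) : ℝ) = (-k - 1 : ℝ)
          by exact_mod_cast congrArg Int.cast (Int.toNat_of_nonneg (by omega))]; ring)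
    simpa using h
end

section
/- Duhamel integral estimate: suppose C(t) = ∫_0^t e^{-C₀ 2^k (t-τ)} ℓ(τ) dτ where ℓ(τ) ≤ (1 + 2^k τ)^{-2/3} and C₀ > 0. Then (1 + 2^k t) (2^k t)^{-1/3} 2^k ∫_0^t e^{-C₀ 2^k(t-τ)} (1+2^k τ)^{-2/3} dτ ≲ 1 uniformly in k ∈ ℕ and t > 0. -/
open MeasureTheory Real

-- exp lower bound
lemma aux_sq_exp (x : ℝ) (hx : 0 ≤ x) : x ^ 2 * Real.exp (-x) ≤ 4 := by
  have h1 := Real.add_one_le_exp (x / 2)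
  have h2 : Real.exp (x / 2) ^ 2 = Real.exp x := by
    rw [sq, ← Real.exp_add]; ring_nf
  have h3 : x ^ 2 ≤ 4 * Real.exp x := by nlinarith [Real.exp_pos (x/2)]
  have h4 : Real.exp (-x) = (Real.exp x)⁻¹ := Real.exp_neg x
  rw [h4]
  rw [mul_inv_le_iff₀ (Real.exp_pos x)]
  linarith

-- exponential integral bound
lemma aux_exp_int (c s t : ℝ) (hc : 0 < c) (hst : s ≤ t) :
    ∫ x in s..t, Real.exp (-c * (t - x)) ≤ 1 / c := by
  have hder : ∀ x ∈ Set.uIcc s t, HasDerivAt (fun y => Real.exp (c * y - c * t) / c)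
      (Real.exp (-c * (t - x))) x := by
    intro x _
    have h1 : HasDerivAt (fun y : ℝ => c * y - c * t) c x := by
      simpa using ((hasDerivAt_id x).const_mul c).sub_const (c * t)
    have h2 := (h1.exp).div_const c
    have : Real.exp (c * x - c * t) * c / c = Real.exp (-c * (t - x)) := by
      rw [mul_div_assoc, div_self hc.ne', mul_one]; ring_nf
    rwa [this] at h2
  have hint : IntervalIntegrable (fun x => Real.exp (-c * (t - x))) volume s t := by
    apply Continuous.intervalIntegrable
    continuity
  have heq := intervalIntegral.integral_eq_sub_of_hasDerivAt hder hint
  rw [heq]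
  have h1 : Real.exp (c * t - c * t) = 1 := by rw [sub_self, Real.exp_zero]
  rw [h1]
  have : 0 ≤ Real.exp (c * s - c * t) / c := by positivity
  linarith

set_option maxHeartbeats 1000000 in

/-- Duhamel integral estimate: for fixed `C₀ > 0`,
`sup_{k∈ℕ, t>0} (1+2^k t)(2^k t)^{-1/3} 2^k ∫_0^t e^{-C₀ 2^k(t-τ)}(1+2^k τ)^{-2/3} dτ < ∞`. -/
theorem stmt18 (C₀ : ℝ) (hC₀ : 0 < C₀) :
    ∃ C > (0 : ℝ), ∀ (k : ℕ) (t : ℝ), 0 < t →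
      (1 + 2 ^ k * t) * ((2 : ℝ) ^ k * t) ^ (-(1 : ℝ) / 3) * 2 ^ k *
        ∫ τ in Set.Ioc (0 : ℝ) t,
          Real.exp (-C₀ * 2 ^ k * (t - τ)) * (1 + 2 ^ k * τ) ^ (-(2 : ℝ) / 3)
      ≤ C := by
  refine ⟨2 + 16 / C₀ ^ 2 + 4 / C₀, by positivity, ?_⟩
  intro k t ht
  set a : ℝ := 2 ^ k with ha_def
  have ha : 0 < a := by positivity
  have hX : 0 < a * t := by positivity
  set f : ℝ → ℝ := fun τ => Real.exp (-C₀ * a * (t - τ)) * (1 + a * τ) ^ (-(2 : ℝ) / 3)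
    with hf_def
  -- continuity / integrability
  have hfc : ∀ s : Set ℝ, s ⊆ Set.Icc 0 t → ContinuousOn f s := by
    intro s hs
    apply ContinuousOn.mul
    · exact (Real.continuous_exp.comp (by continuity)).continuousOn
    · apply ContinuousOn.rpow_const
      · exact (continuous_const.add (continuous_const.mul continuous_id)).continuousOn
      · intro x hx
        left
        have hx0 : 0 ≤ x := (hs hx).1
        positivity
  have hint1 : IntervalIntegrable f volume 0 (t / 2) := by
    apply ContinuousOn.intervalIntegrable
    apply hfc
    rw [Set.uIcc_of_le (by linarith)]
    exact Set.Icc_subset_Icc le_rfl (by linarith)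
  have hint2 : IntervalIntegrable f volume (t / 2) t := by
    apply ContinuousOn.intervalIntegrable
    apply hfc
    rw [Set.uIcc_of_le (by linarith)]
    exact Set.Icc_subset_Icc (by linarith) le_rfl
  have hint : IntervalIntegrable f volume 0 t := hint1.trans hint2
  have hIoc : (∫ τ in Set.Ioc (0 : ℝ) t, f τ) = ∫ τ in (0 : ℝ)..t, f τ :=
    (intervalIntegral.integral_of_le ht.le).symm
  -- pointwise bound pieces
  have hrpow_le_one : ∀ x : ℝ, 0 ≤ x → (1 + a * x) ^ (-(2 : ℝ) / 3) ≤ 1 := by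
    intro x hx
    apply Real.rpow_le_one_of_one_le_of_nonpos
    · nlinarith
    · norm_num
  have hrpow_nonneg : ∀ x : ℝ, 0 ≤ x → 0 ≤ (1 + a * x) ^ (-(2 : ℝ) / 3) := by
    intro x hx
    positivity
  rw [hIoc]
  set P : ℝ := (1 + a * t) * (a * t) ^ (-(1 : ℝ) / 3) * a with hP_def
  have hP : 0 ≤ P := by positivity
  rcases le_or_gt (a * t) 1 with hl1 | hl1
  · -- small case : a*t ≤ 1
    have hpt : ∀ x ∈ Set.Icc (0 : ℝ) t, f x ≤ 1 := by
      intro x hx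
      have h1 : Real.exp (-C₀ * a * (t - x)) ≤ 1 := by
        apply Real.exp_le_one_iff.mpr
        have := mul_nonneg (mul_nonneg hC₀.le ha.le) (sub_nonneg.mpr hx.2)
        nlinarith
      calc f x ≤ 1 * 1 :=
            mul_le_mul h1 (hrpow_le_one x hx.1) (hrpow_nonneg x hx.1) zero_le_one
        _ = 1 := by ring
    have hI : (∫ τ in (0:ℝ)..t, f τ) ≤ t := by
      have := intervalIntegral.integral_mono_on ht.le hint
        (intervalIntegrable_const (c := (1:ℝ))) hpt
      simpa using this
    have hInn : 0 ≤ ∫ τ in (0:ℝ)..t, f τ := by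
      apply intervalIntegral.integral_nonneg ht.le
      intro x hx
      exact mul_nonneg (Real.exp_nonneg _) (hrpow_nonneg x hx.1)
    have step : P * ∫ τ in (0:ℝ)..t, f τ ≤ P * t := mul_le_mul_of_nonneg_left hI hP
    have hPt : P * t = (1 + a * t) * ((a * t) ^ (-(1 : ℝ) / 3) * (a * t)) := by
      rw [hP_def]; ring
    have h23 : (a * t) ^ (-(1 : ℝ) / 3) * (a * t) = (a * t) ^ ((2 : ℝ) / 3) := by
      nth_rewrite 2 [← Real.rpow_one (a * t)]
      rw [← Real.rpow_add hX]
      norm_num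
    have h23le : (a * t) ^ ((2 : ℝ) / 3) ≤ 1 :=
      Real.rpow_le_one hX.le hl1 (by norm_num)
    have : P * t ≤ 2 := by
      rw [hPt, h23]
      nlinarith [Real.rpow_nonneg hX.le ((2:ℝ)/3)]
    have hrest : 0 ≤ 16 / C₀ ^ 2 + 4 / C₀ := by positivity
    calc P * ∫ τ in (0:ℝ)..t, f τ ≤ P * t := step
      _ ≤ 2 := this
      _ ≤ 2 + 16 / C₀ ^ 2 + 4 / C₀ := by linarith
  · -- big case : 1 < a*t
    set E : ℝ := Real.exp (-(C₀ * (a * t) / 2)) with hE_def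
    have hE0 : 0 ≤ E := Real.exp_nonneg _
    set q : ℝ := (a * t / 2) ^ (-(2 : ℝ) / 3) with hq_def
    have hq0 : 0 ≤ q := Real.rpow_nonneg (by nlinarith) _
    -- bound on first piece
    have hB1 : (∫ τ in (0:ℝ)..(t/2), f τ) ≤ (t / 2) * E := by
      have hpt : ∀ x ∈ Set.Icc (0:ℝ) (t/2), f x ≤ E := by
        intro x hx
        have h1 : Real.exp (-C₀ * a * (t - x)) ≤ E := by
          rw [hE_def]
          apply Real.exp_le_exp.mpr
          have h7 : C₀ * a * (t / 2) ≤ C₀ * a * (t - x) :=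
            mul_le_mul_of_nonneg_left (by linarith [hx.2]) (by positivity)
          nlinarith
        calc f x ≤ E * 1 :=
              mul_le_mul h1 (hrpow_le_one x hx.1) (hrpow_nonneg x hx.1) hE0
          _ = E := by ring
      have := intervalIntegral.integral_mono_on (by linarith) hint1
        (intervalIntegrable_const (c := E)) hpt
      simpa using this
    -- bound on second piece
    have hB2 : (∫ τ in (t/2)..t, f τ) ≤ q * (1 / (C₀ * a)) := by
      have hpt : ∀ x ∈ Set.Icc (t/2) t, f x ≤ q * Real.exp (-(C₀ * a) * (t - x)) := by
        intro x hx
        have hbase : a * t / 2 ≤ 1 + a * x := by nlinarith [hx.1]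
        have h2 : (1 + a * x) ^ (-(2:ℝ)/3) ≤ q := by
          rw [hq_def]
          exact Real.rpow_le_rpow_of_nonpos (by nlinarith) hbase (by norm_num)
        have hx0 : 0 ≤ x := by linarith [hx.1]
        calc f x = (1 + a * x) ^ (-(2:ℝ)/3) * Real.exp (-(C₀ * a) * (t - x)) := by
              rw [hf_def]; ring_nf
          _ ≤ q * Real.exp (-(C₀ * a) * (t - x)) :=
              mul_le_mul_of_nonneg_right h2 (Real.exp_nonneg _)
      have hgint : IntervalIntegrable
          (fun x => q * Real.exp (-(C₀ * a) * (t - x))) volume (t/2) t := by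
        have hc : Continuous fun x : ℝ => q * Real.exp (-(C₀ * a) * (t - x)) :=
          continuous_const.mul (Real.continuous_exp.comp
            (continuous_const.mul (continuous_const.sub continuous_id)))
        exact hc.intervalIntegrable _ _
      have step1 := intervalIntegral.integral_mono_on (by linarith) hint2 hgint hpt
      have step2 : (∫ x in (t/2)..t, q * Real.exp (-(C₀ * a) * (t - x)))
          = q * ∫ x in (t/2)..t, Real.exp (-(C₀ * a) * (t - x)) :=
        intervalIntegral.integral_const_mul _ _
      have step3 : (∫ x in (t/2)..t, Real.exp (-(C₀ * a) * (t - x))) ≤ 1 / (C₀ * a) :=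
        aux_exp_int (C₀ * a) (t/2) t (by positivity) (by linarith)
      calc (∫ τ in (t/2)..t, f τ) ≤ q * ∫ x in (t/2)..t, Real.exp (-(C₀ * a) * (t - x)) := by
            rw [← step2]; exact step1
        _ ≤ q * (1 / (C₀ * a)) := mul_le_mul_of_nonneg_left step3 hq0
    -- assemble
    have hsplit : (∫ τ in (0:ℝ)..t, f τ)
        = (∫ τ in (0:ℝ)..(t/2), f τ) + ∫ τ in (t/2)..t, f τ :=
      (intervalIntegral.integral_add_adjacent_intervals hint1 hint2).symm
    have hItot : (∫ τ in (0:ℝ)..t, f τ) ≤ (t / 2) * E + q * (1 / (C₀ * a)) := by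
      rw [hsplit]; exact add_le_add hB1 hB2
    have step : P * ∫ τ in (0:ℝ)..t, f τ ≤ P * ((t / 2) * E) + P * (q * (1 / (C₀ * a))) := by
      calc P * ∫ τ in (0:ℝ)..t, f τ ≤ P * ((t / 2) * E + q * (1 / (C₀ * a))) :=
            mul_le_mul_of_nonneg_left hItot hP
        _ = P * ((t / 2) * E) + P * (q * (1 / (C₀ * a))) := by ring
    -- term 1
    set g : ℝ := (a * t) ^ (-(1 : ℝ) / 3) with hg_def
    have hg0 : 0 ≤ g := Real.rpow_nonneg hX.le _
    have hg1 : g ≤ 1 := Real.rpow_le_one_of_one_le_of_nonpos hl1.le (by norm_num)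
    have hT1 : P * ((t / 2) * E) ≤ 16 / C₀ ^ 2 := by
      have e1 : P * ((t / 2) * E) = (1 + a * t) * g * ((a * t) * E) / 2 := by
        rw [hP_def, hg_def]; ring
      have e2 : (1 + a * t) * g * ((a * t) * E) / 2 ≤ (a * t) ^ 2 * E := by
        have hXE : 0 ≤ (a * t) * E := mul_nonneg hX.le hE0
        have h1 : g * ((a * t) * E) ≤ (a * t) * E :=
          (mul_le_mul_of_nonneg_right hg1 hXE).trans_eq (one_mul _)
        have h3 : (1 + a * t) * (g * ((a * t) * E)) ≤ (1 + a * t) * ((a * t) * E) :=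
          mul_le_mul_of_nonneg_left h1 (by nlinarith)
        have h4 : (1 + a * t) * ((a * t) * E) ≤ (2 * (a * t)) * ((a * t) * E) :=
          mul_le_mul_of_nonneg_right (by linarith) hXE
        nlinarith
      have e3 : (a * t) ^ 2 * E ≤ 16 / C₀ ^ 2 := by
        rw [le_div_iff₀ (by positivity : (0:ℝ) < C₀ ^ 2)]
        have h5 := aux_sq_exp (C₀ * (a * t) / 2) (by positivity)
        rw [← hE_def] at h5
        nlinarith [h5]
      linarith [e1 ▸ e2]
    -- term 2
    set r : ℝ := (a * t) ^ (-(2 : ℝ) / 3) with hr_def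
    have hr0 : 0 ≤ r := Real.rpow_nonneg hX.le _
    have hq2r : q ≤ 2 * r := by
      have hqe : q = r * 2 ^ ((2:ℝ)/3) := by
        rw [hq_def, hr_def, Real.div_rpow hX.le (by norm_num), div_eq_mul_inv,
          ← Real.rpow_neg (by norm_num : (0:ℝ) ≤ 2)]
        norm_num
      have h2c : (2:ℝ) ^ ((2:ℝ)/3) ≤ 2 := by
        have := Real.rpow_le_rpow_of_exponent_le (by norm_num : (1:ℝ) ≤ 2)
          (by norm_num : (2:ℝ)/3 ≤ 1)
        rwa [Real.rpow_one] at this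
      calc q = r * 2 ^ ((2:ℝ)/3) := hqe
        _ ≤ r * 2 := mul_le_mul_of_nonneg_left h2c hr0
        _ = 2 * r := by ring
    have hgr : g * r * (a * t) = 1 := by
      rw [hg_def, hr_def, ← Real.rpow_add hX]
      norm_num
      rw [Real.rpow_neg_one]
      field_simp
    have hT2 : P * (q * (1 / (C₀ * a))) ≤ 4 / C₀ := by
      have e1 : P * (q * (1 / (C₀ * a))) = (1 + a * t) * g * q / C₀ := by
        rw [hP_def, hg_def]
        field_simp
      rw [e1, div_le_div_iff₀ hC₀ hC₀]
      have h5 : (1 + a * t) * g * q ≤ (1 + a * t) * g * (2 * r) :=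
        mul_le_mul_of_nonneg_left hq2r (by positivity)
      have h6 : (1 + a * t) * (g * r) ≤ 2 * (a * t) * (g * r) := by
        nlinarith [mul_nonneg hg0 hr0]
      nlinarith [mul_nonneg hg0 hr0]
    calc P * ∫ τ in (0:ℝ)..t, f τ ≤ P * ((t / 2) * E) + P * (q * (1 / (C₀ * a))) := step
      _ ≤ 16 / C₀ ^ 2 + 4 / C₀ := add_le_add hT1 hT2
      _ ≤ 2 + 16 / C₀ ^ 2 + 4 / C₀ := by linarith
end
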